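/- arXiv:1107.3731 — 6 statements merged into one kernel-verified Lean document; each statement's English description precedes it below -/
import Mathlib

section
/- Let P and Q be probability measures on a finite set S such that for all s ∈ S, |log(P(s)/Q(s))| ≤ ε, where 0 ≤ ε ≤ 1. Then the expected privacy loss E_{s∼P}[log(P(s)/Q(s))] ≤ 2ε². -/
open Real BigOperators

lemma exp_le_one_add_add_sq {t : ℝ} (h : |t| ≤ 1) : Real.exp t ≤ 1 + t + t ^ 2 := by
  have hb := Real.exp_bound h (n := 2) (by norm_num)
  have h1 := (abs_sub_le_iff.1 hb).1
  have hs : ∑ m ∈ Finset.range 2, t ^ m / m.factorial = 1 + t := by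
    simp [Finset.sum_range_succ]
  rw [hs] at h1
  have h2 : |t| ^ 2 = t ^ 2 := sq_abs t
  norm_num [Nat.factorial, h2] at h1
  nlinarith [sq_nonneg t]

/-- Dwork–Rothblum–Vadhan: bounded privacy loss implies expected privacy
loss at most `2 ε ^ 2`. -/
theorem dwork_rothblum_vadhan_expected_privacy_loss
    {S : Type*} [Fintype S] (P Q : S → ℝ) (ε : ℝ)
    (hε0 : 0 ≤ ε) (hε1 : ε ≤ 1)
    (hPpos : ∀ s, 0 < P s) (hQpos : ∀ s, 0 < Q s)
    (hPsum : ∑ s, P s = 1) (hQsum : ∑ s, Q s = 1)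
    (hloss : ∀ s, |Real.log (P s / Q s)| ≤ ε) :
    ∑ s, P s * Real.log (P s / Q s) ≤ 2 * ε ^ 2 := by
  have key : ∀ s, P s * Real.log (P s / Q s) ≤ P s * ε ^ 2 + (P s - Q s) := by
    intro s
    set z := Real.log (P s / Q s) with hz
    have hzε : |z| ≤ ε := hloss s
    have hz1 : |(-z)| ≤ 1 := by rw [abs_neg]; exact hzε.trans hε1
    have hexp : Real.exp (-z) ≤ 1 - z + z ^ 2 := by
      have := exp_le_one_add_add_sq hz1
      nlinarith [this]
    have hePQ : Real.exp z = P s / Q s := by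
      rw [hz, Real.exp_log (div_pos (hPpos s) (hQpos s))]
    have heneg : Real.exp (-z) = Q s / P s := by
      rw [Real.exp_neg, hePQ, inv_div]
    have hQP : Q s ≤ P s * (1 - z + z ^ 2) := by
      have := mul_le_mul_of_nonneg_left hexp (hPpos s).le
      rw [heneg, mul_div_cancel₀ _ (ne_of_gt (hPpos s))] at this
      linarith
    have hz2 : z ^ 2 ≤ ε ^ 2 := by
      rw [← sq_abs z]
      exact pow_le_pow_left₀ (abs_nonneg z) hzε 2
    nlinarith [(hPpos s).le]
  calc ∑ s, P s * Real.log (P s / Q s)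
      ≤ ∑ s, (P s * ε ^ 2 + (P s - Q s)) := Finset.sum_le_sum fun s _ => key s
    _ = ε ^ 2 := by
        rw [Finset.sum_add_distrib, ← Finset.sum_mul, Finset.sum_sub_distrib, hPsum, hQsum]
        ring
    _ ≤ 2 * ε ^ 2 := by nlinarith [sq_nonneg ε]
end

section
/- Let Y₁,…,Y_k be i.i.d. Laplace random variables with scale b > 0, let q₁,…,q_k ∈ [0,1] be scalars, and let Y = Σᵢ qᵢYᵢ. If 0 < α ≤ kb, then Pr[Y ≥ α] ≤ exp(-α²/(6kb²)). -/
/-! Chernoff bound. The Laplace law of scale `b` has moment generating function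
`(1 - (b s)²)⁻¹` for `|b s| < 1`, and `(1 - x)⁻¹ ≤ exp (3x/2)` for `0 ≤ x ≤ 1/3`; weights in
`[0, 1]` only shrink the argument. By independence,
`P(∑ qᵢ Yᵢ ≥ α) ≤ exp (-t α + (3/2) k b² t²)`, and the minimiser `t = α / (3 k b²)` is admissible
(`b t ≤ 1/3`) exactly because `α ≤ k b`, giving the exponent `-α² / (6 k b²)`. -/

open MeasureTheory Real BigOperators

/-- The Laplace distribution with scale `b`, given by the density
`(1/(2b)) * exp (-|x|/b)` with respect to Lebesgue measure. -/
noncomputable def laplaceMeasure (b : ℝ) : Measure ℝ :=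
  volume.withDensity fun x => ENNReal.ofReal ((1 / (2 * b)) * Real.exp (-|x| / b))

open ProbabilityTheory Set

section AbsExponential

variable {s c : ℝ}

lemma exp_mul_sub_mul_abs_of_nonpos {x : ℝ} (hx : x ≤ 0) :
    exp (s * x - c * |x|) = exp ((s + c) * x) := by
  rw [abs_of_nonpos hx]; ring_nf

lemma exp_mul_sub_mul_abs_of_pos {x : ℝ} (hx : 0 < x) :
    exp (s * x - c * |x|) = exp ((s - c) * x) := by
  rw [abs_of_pos hx]; ring_nf

lemma integrable_exp_mul_sub_mul_abs (h : |s| < c) :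
    Integrable fun x ↦ exp (s * x - c * |x|) := by
  obtain ⟨h₁, h₂⟩ := abs_lt.mp h
  rw [← integrableOn_univ, ← Iic_union_Ioi (a := 0)]
  exact ((integrableOn_exp_mul_Iic (by linarith) 0).congr_fun
      (fun x hx ↦ (exp_mul_sub_mul_abs_of_nonpos hx).symm) measurableSet_Iic).union
    ((integrableOn_exp_mul_Ioi (by linarith) 0).congr_fun
      (fun x hx ↦ (exp_mul_sub_mul_abs_of_pos hx).symm) measurableSet_Ioi)

lemma integral_exp_mul_sub_mul_abs (h : |s| < c) :
    ∫ x, exp (s * x - c * |x|) = 2 * c / (c ^ 2 - s ^ 2) := by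
  obtain ⟨h₁, h₂⟩ := abs_lt.mp h
  have hint := integrable_exp_mul_sub_mul_abs h
  rw [← intervalIntegral.integral_Iic_add_Ioi (b := 0) hint.integrableOn hint.integrableOn,
    setIntegral_congr_fun measurableSet_Iic fun x hx ↦ exp_mul_sub_mul_abs_of_nonpos hx,
    setIntegral_congr_fun measurableSet_Ioi fun x hx ↦ exp_mul_sub_mul_abs_of_pos hx,
    integral_exp_mul_Iic (by linarith) 0, integral_exp_mul_Ioi (by linarith) 0]
  simp only [mul_zero, exp_zero]
  have : s + c ≠ 0 := by linarith
  have : s - c ≠ 0 := by linarith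
  have : c ^ 2 - s ^ 2 ≠ 0 := by nlinarith
  field_simp
  ring

end AbsExponential

section LaplaceMeasure

variable {b s : ℝ}

lemma integrable_laplaceMeasure_iff (hb : 0 ≤ b) {g : ℝ → ℝ} :
    Integrable g (laplaceMeasure b) ↔ Integrable fun x ↦ 1 / (2 * b) * exp (-|x| / b) * g x := by
  rw [laplaceMeasure, integrable_withDensity_iff_integrable_smul' (by fun_prop)
    (ae_of_all _ fun _ ↦ ENNReal.ofReal_lt_top)]
  simp_rw [ENNReal.toReal_ofReal (by positivity : 0 ≤ 1 / (2 * b) * exp (-|_| / b)), smul_eq_mul]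

lemma integral_laplaceMeasure (hb : 0 ≤ b) (g : ℝ → ℝ) :
    ∫ x, g x ∂laplaceMeasure b = ∫ x, 1 / (2 * b) * exp (-|x| / b) * g x := by
  rw [laplaceMeasure, integral_withDensity_eq_integral_toReal_smul (by fun_prop)
    (ae_of_all _ fun _ ↦ ENNReal.ofReal_lt_top)]
  simp_rw [ENNReal.toReal_ofReal (by positivity : 0 ≤ 1 / (2 * b) * exp (-|_| / b)), smul_eq_mul]

lemma laplace_density_mul_exp_mul (x : ℝ) :
    1 / (2 * b) * exp (-|x| / b) * exp (s * x) = 1 / (2 * b) * exp (s * x - b⁻¹ * |x|) := by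
  rw [mul_assoc, ← exp_add]; ring_nf

lemma abs_lt_inv_of_abs_mul_lt_one (hb : 0 < b) (hs : |b * s| < 1) : |s| < b⁻¹ := by
  rw [abs_mul, abs_of_pos hb, ← mul_one 1] at hs
  simpa using (lt_inv_mul_iff₀ hb).mpr hs

lemma integrable_exp_mul_laplaceMeasure (hb : 0 < b) (hs : |b * s| < 1) :
    Integrable (fun x ↦ exp (s * x)) (laplaceMeasure b) := by
  rw [integrable_laplaceMeasure_iff hb.le]
  simp_rw [laplace_density_mul_exp_mul]
  exact (integrable_exp_mul_sub_mul_abs (abs_lt_inv_of_abs_mul_lt_one hb hs)).const_mul _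

lemma mgf_id_laplaceMeasure (hb : 0 < b) (hs : |b * s| < 1) :
    mgf id (laplaceMeasure b) s = (1 - (b * s) ^ 2)⁻¹ := by
  rw [mgf, integral_laplaceMeasure hb.le]
  simp_rw [id, laplace_density_mul_exp_mul]
  rw [integral_const_mul, integral_exp_mul_sub_mul_abs (abs_lt_inv_of_abs_mul_lt_one hb hs)]
  rw [show b⁻¹ ^ 2 - s ^ 2 = (1 - (b * s) ^ 2) / b ^ 2 by field_simp]
  field_simp

end LaplaceMeasure

lemma inv_one_sub_le_exp_three_halves_mul {x : ℝ} (h₀ : 0 ≤ x) (h₁ : x ≤ 1 / 3) :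
    (1 - x)⁻¹ ≤ exp (3 / 2 * x) := by
  calc (1 - x)⁻¹ ≤ 1 + 3 / 2 * x := by
        rw [inv_le_iff_one_le_mul₀ (by linarith)]; nlinarith
    _ ≤ exp (3 / 2 * x) := by linarith [add_one_le_exp (3 / 2 * x)]

section LaplaceVariable

variable {Ω : Type*} [MeasurableSpace Ω] {μ : Measure Ω} {Y : Ω → ℝ} {b s : ℝ}

lemma mgf_le_of_map_eq_laplaceMeasure (hY : AEMeasurable Y μ)
    (hlaw : μ.map Y = laplaceMeasure b) (hb : 0 < b) (hs : (b * s) ^ 2 ≤ 1 / 3) :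
    mgf Y μ s ≤ exp (3 / 2 * (b * s) ^ 2) := by
  have hs' : |b * s| < 1 := (sq_lt_one_iff_abs_lt_one _).mp (by linarith)
  rw [← mgf_id_map hY, hlaw, mgf_id_laplaceMeasure hb hs']
  exact inv_one_sub_le_exp_three_halves_mul (by positivity) hs

variable {q t : ℝ}

lemma integrable_exp_mul_const_mul_of_map_eq_laplaceMeasure (hY : AEMeasurable Y μ)
    (hlaw : μ.map Y = laplaceMeasure b) (hb : 0 < b) (hq : |q| ≤ 1) (ht : |b * t| < 1) :
    Integrable (fun ω ↦ exp (t * (q * Y ω))) μ := by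
  have hbtq : |b * (t * q)| < 1 := by
    rw [← mul_assoc, abs_mul]
    nlinarith [abs_nonneg (b * t), abs_nonneg q]
  have hint := integrable_exp_mul_laplaceMeasure hb hbtq
  rw [← hlaw] at hint
  simpa only [mul_assoc, Function.comp_def] using (integrable_map_measure (by fun_prop) hY).mp hint

lemma mgf_const_mul_le_of_map_eq_laplaceMeasure (hY : AEMeasurable Y μ)
    (hlaw : μ.map Y = laplaceMeasure b) (hb : 0 < b) (hq : |q| ≤ 1) (ht : (b * t) ^ 2 ≤ 1 / 3) :
    mgf (fun ω ↦ q * Y ω) μ t ≤ exp (3 / 2 * (b * t) ^ 2) := by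
  have hsq : (b * (q * t)) ^ 2 ≤ (b * t) ^ 2 := by
    rw [mul_left_comm, mul_pow]
    nlinarith [(sq_le_one_iff_abs_le_one q).mpr hq, sq_nonneg (b * t)]
  rw [mgf_const_mul]
  exact (mgf_le_of_map_eq_laplaceMeasure hY hlaw hb (hsq.trans ht)).trans (by gcongr)

end LaplaceVariable

lemma measure_sum_ge_le_of_iIndepFun {Ω ι : Type*} [MeasurableSpace Ω] {μ : Measure Ω}
    {X : ι → Ω → ℝ} (hindep : iIndepFun X μ) (hmeas : ∀ i, Measurable (X i)) (s : Finset ι)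
    {t c : ℝ} (ht : 0 ≤ t) (hint : ∀ i ∈ s, Integrable (fun ω ↦ exp (t * X i ω)) μ)
    (hmgf : ∀ i ∈ s, mgf (X i) μ t ≤ exp c) (ε : ℝ) :
    μ.real {ω | ε ≤ ∑ i ∈ s, X i ω} ≤ exp (-t * ε + s.card * c) := by
  have := hindep.isProbabilityMeasure
  calc μ.real {ω | ε ≤ ∑ i ∈ s, X i ω}
      ≤ exp (-t * ε) * mgf (∑ i ∈ s, X i) μ t := by
        simpa only [Finset.sum_apply] using
          measure_ge_le_exp_mul_mgf ε ht (hindep.integrable_exp_mul_sum hmeas hint)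
    _ ≤ exp (-t * ε) * exp c ^ s.card := by
        rw [hindep.mgf_sum hmeas]
        gcongr
        exact (Finset.prod_le_prod (fun i _ ↦ mgf_nonneg) hmgf).trans_eq (Finset.prod_const _)
    _ = exp (-t * ε + s.card * c) := by rw [← exp_nat_mul, ← exp_add]

theorem laplace_weighted_sum_tail_small_general
    {Ω : Type*} [MeasureSpace Ω]
    (k : ℕ) (b : ℝ) (hb : 0 < b)
    (Y : Fin k → Ω → ℝ) (hmeas : ∀ i, Measurable (Y i))
    (hlaw : ∀ i, Measure.map (Y i) (volume : Measure Ω) = laplaceMeasure b)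
    (hindep : ProbabilityTheory.iIndepFun Y (volume : Measure Ω))
    (q : Fin k → ℝ) (hq : ∀ i, q i ∈ Set.Icc (0 : ℝ) 1)
    (α : ℝ) (hα : 0 < α) (hαk : α ≤ k * b) :
    ((volume : Measure Ω) {ω | α ≤ ∑ i, q i * Y i ω}).toReal ≤
      Real.exp (-α ^ 2 / (6 * k * b ^ 2)) := by
  have hk : (0 : ℝ) < k := pos_of_mul_pos_left (hα.trans_le hαk) hb.le
  set t := α / (3 * k * b ^ 2) with ht
  have hbt : b * t ≤ 1 / 3 := by
    rw [ht, show b * (α / (3 * k * b ^ 2)) = α / (k * b) / 3 by field_simp]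
    linarith [(div_le_one (by positivity)).mpr hαk]
  have hq' : ∀ i, |q i| ≤ 1 := fun i ↦ abs_le.mpr ⟨by linarith [(hq i).1], (hq i).2⟩
  have hindep' : iIndepFun (fun i ω ↦ q i * Y i ω) volume :=
    hindep.comp (fun i y ↦ q i * y) fun i ↦ by fun_prop
  calc ((volume : Measure Ω) {ω | α ≤ ∑ i, q i * Y i ω}).toReal
      ≤ exp (-t * α + (Finset.univ : Finset (Fin k)).card * (3 / 2 * (b * t) ^ 2)) :=
        measure_sum_ge_le_of_iIndepFun hindep' (fun i ↦ (hmeas i).const_mul (q i)) _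
          (by positivity)
          (fun i _ ↦ integrable_exp_mul_const_mul_of_map_eq_laplaceMeasure (hmeas i).aemeasurable
            (hlaw i) hb (hq' i) (by rw [abs_of_nonneg (by positivity)]; linarith))
          (fun i _ ↦ mgf_const_mul_le_of_map_eq_laplaceMeasure (hmeas i).aemeasurable (hlaw i) hb
            (hq' i) (by nlinarith [(by positivity : 0 ≤ b * t)])) α
    _ = exp (-α ^ 2 / (6 * k * b ^ 2)) := by
        rw [Finset.card_univ, Fintype.card_fin, ht]
        congr 1
        field_simp
        ring

/-- Tail bound for weighted sums of i.i.d. Laplace random variables,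
small-deviation regime: if `0 < α ≤ k b` then
`Pr[∑ qᵢ Yᵢ ≥ α] ≤ exp (-α² / (6 k b²))`. -/
theorem laplace_weighted_sum_tail_small
    {Ω : Type*} [MeasureSpace Ω] [IsProbabilityMeasure (volume : Measure Ω)]
    (k : ℕ) (hk : 0 < k) (b : ℝ) (hb : 0 < b)
    (Y : Fin k → Ω → ℝ) (hmeas : ∀ i, Measurable (Y i))
    (hlaw : ∀ i, Measure.map (Y i) (volume : Measure Ω) = laplaceMeasure b)
    (hindep : ProbabilityTheory.iIndepFun Y (volume : Measure Ω))
    (q : Fin k → ℝ) (hq : ∀ i, q i ∈ Set.Icc (0 : ℝ) 1)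
    (α : ℝ) (hα : 0 < α) (hαk : α ≤ k * b) :
    ((volume : Measure Ω) {ω | α ≤ ∑ i, q i * Y i ω}).toReal ≤
      Real.exp (-α ^ 2 / (6 * k * b ^ 2)) :=
  laplace_weighted_sum_tail_small_general k b hb Y hmeas hlaw hindep q hq α hα hαk
end

section
/- Fix a finite universe X and a database D ∈ ℝ^X. Consider the Frieze/Kannan update: given a current hypothesis D^t ∈ ℝ^X and a query Q ∈ [0,1]^X (a linear query evaluated as Q(D) = Σ_{i∈X} Q(i)·D(i)) with Q(D^t) - Q(D) ≥ α, set D^{t+1} = D^t - (α/|X|)·Q. Then ‖D - D^t‖₂² - ‖D - D^{t+1}‖₂² ≥ α²/|X|. -/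
open BigOperators

/-!
Moving `Dᵗ` by `-c • Q` changes the squared distance to `D` by
`2c (Q(Dᵗ) - Q(D)) - c² ‖Q‖²`, which is at least `2cα - c²|X|` since `‖Q‖² ≤ |X|` for a
`[0,1]`-valued `Q`. The step size `c = α/|X|` maximizes this quadratic in `c`, with value `α²/|X|`.
-/

section

variable {X : Type*} [Fintype X]

theorem sum_sq_sub_sub_sum_sq_sub_sub_mul (D T Q : X → ℝ) (c : ℝ) :
    (∑ i, (D i - T i) ^ 2) - ∑ i, (D i - (T i - c * Q i)) ^ 2 =
      2 * c * (∑ i, Q i * T i - ∑ i, Q i * D i) - c ^ 2 * ∑ i, Q i ^ 2 := by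
  simp only [mul_sub, Finset.mul_sum, ← Finset.sum_sub_distrib]
  exact Finset.sum_congr rfl fun i _ => by ring

theorem sum_sq_le_card_of_mem_Icc {Q : X → ℝ} (hQ : ∀ i, Q i ∈ Set.Icc (0 : ℝ) 1) :
    ∑ i, Q i ^ 2 ≤ Fintype.card X := by
  calc ∑ i, Q i ^ 2 ≤ ∑ _i : X, (1 : ℝ) :=
        Finset.sum_le_sum fun i _ => pow_le_one₀ (hQ i).1 (hQ i).2
    _ = Fintype.card X := by simp

end

theorem sq_div_eq_two_mul_div_mul_sub_div_sq_mul (α n : ℝ) :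
    α ^ 2 / n = 2 * (α / n) * α - (α / n) ^ 2 * n := by
  rcases eq_or_ne n 0 with rfl | hn
  · simp
  · field_simp
    ring

theorem friezeKannan_potential_drop_general
    {X : Type*} [Fintype X]
    (D Dt Q : X → ℝ) (hQ : ∀ i, Q i ∈ Set.Icc (0 : ℝ) 1)
    (α : ℝ) (hα : 0 < α)
    (hdist : α ≤ ∑ i, Q i * Dt i - ∑ i, Q i * D i)
    (Dnext : X → ℝ)
    (hupd : Dnext = fun i => Dt i - α / (Fintype.card X) * Q i) :
    α ^ 2 / (Fintype.card X) ≤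
      (∑ i, (D i - Dt i) ^ 2) - ∑ i, (D i - Dnext i) ^ 2 := by
  subst hupd
  have hc : 0 ≤ α / (Fintype.card X : ℝ) := by positivity
  rw [sum_sq_sub_sub_sum_sq_sub_sub_mul, sq_div_eq_two_mul_div_mul_sub_div_sq_mul]
  gcongr
  exact sum_sq_le_card_of_mem_Icc hQ

/-- Per-step potential drop of the Frieze/Kannan update: if the linear query
`Q` overestimates, `Q(Dᵗ) - Q(D) ≥ α`, then subtracting `(α/|X|) • Q`
decreases the squared `ℓ₂` distance to `D` by at least `α²/|X|`. -/
theorem friezeKannan_potential_drop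
    {X : Type*} [Fintype X] [Nonempty X]
    (D Dt Q : X → ℝ) (hQ : ∀ i, Q i ∈ Set.Icc (0 : ℝ) 1)
    (α : ℝ) (hα : 0 < α)
    (hdist : α ≤ ∑ i, Q i * Dt i - ∑ i, Q i * D i)
    (Dnext : X → ℝ)
    (hupd : Dnext = fun i => Dt i - α / (Fintype.card X) * Q i) :
    α ^ 2 / (Fintype.card X) ≤
      (∑ i, (D i - Dt i) ^ 2) - ∑ i, (D i - Dnext i) ^ 2 :=
  friezeKannan_potential_drop_general D Dt Q hQ α hα hdist Dnext hupd
end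

section
/- Fix a finite universe X, a database D ∈ ℝ^X, and α > 0. Suppose D^1 = 0 and for each t, Q^t ∈ [0,1]^X is a linear query with |Q^t(D) - Q^t(D^t)| ≥ α, and D^{t+1} = D^t - sign(Q^t(D^t) - Q^t(D))·(α/|X|)·Q^t. Then the number of steps C in any such sequence satisfies C ≤ ‖D‖₂²·|X|/α². -/
/-!
The potential `Φ t = ‖D - Dᵗ‖₂²` starts at `‖D‖₂²` and is never negative. Writing `u = D - Dᵗ`
and `η = α / |X|`, one update replaces `u` by `u - sign(Q(u)) η Q`, so
`‖u'‖₂² = ‖u‖₂² - 2η |Q(u)| + η² sign(Q(u))² ‖Q‖₂² ≤ ‖u‖₂² - 2ηα + η² |X| = ‖u‖₂² - α² / |X|`,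
using `|Q(u)| ≥ α` and `‖Q‖₂² ≤ |X|` for `Q ∈ [0,1]^X`. Hence at most `‖D‖₂² |X| / α²` steps.
-/

namespace Real

lemma sign_mul_self_eq_abs (r : ℝ) : sign r * r = |r| := by
  rcases lt_trichotomy r 0 with h | rfl | h
  · rw [sign_of_neg h, abs_of_neg h]; ring
  · simp
  · rw [sign_of_pos h, abs_of_pos h, one_mul]

lemma sign_sq_le_one (r : ℝ) : sign r ^ 2 ≤ 1 := by
  rcases sign_apply_eq r with h | h | h <;> rw [h] <;> norm_num

end Real

lemma nat_mul_le_sub_of_forall_le_sub {Φ : ℕ → ℝ} {δ : ℝ} {C : ℕ}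
    (h : ∀ t < C, Φ (t + 1) ≤ Φ t - δ) : C * δ ≤ Φ 0 - Φ C := by
  induction C with
  | zero => simp
  | succ k ih =>
    have hk := ih fun t ht => h t (by omega)
    push_cast
    linarith [h k (by omega)]

section DotProduct

variable {X : Type*} [Fintype X]

lemma dotProduct_self_nonneg (v : X → ℝ) : 0 ≤ v ⬝ᵥ v :=
  Fintype.sum_nonneg fun i => mul_self_nonneg (v i)

lemma dotProduct_sub_smul_self (u q : X → ℝ) (c : ℝ) :
    (u - c • q) ⬝ᵥ (u - c • q) = u ⬝ᵥ u - 2 * c * (q ⬝ᵥ u) + c ^ 2 * (q ⬝ᵥ q) := by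
  simp only [sub_dotProduct, dotProduct_sub, smul_dotProduct, dotProduct_smul, smul_eq_mul,
    dotProduct_comm u q]
  ring

lemma dotProduct_self_le_card {q : X → ℝ} (hq : ∀ i, |q i| ≤ 1) :
    q ⬝ᵥ q ≤ Fintype.card X := by
  calc q ⬝ᵥ q = ∑ i, |q i| * |q i| := by simp only [dotProduct, abs_mul_abs_self]
    _ ≤ ∑ _i : X, (1 : ℝ) := by
        gcongr with i
        exact mul_le_one₀ (hq i) (abs_nonneg _) (hq i)
    _ = Fintype.card X := by simp

lemma dotProduct_self_sub_sign_smul_le (u q : X → ℝ) (hq : ∀ i, |q i| ≤ 1) (η : ℝ) :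
    (u - (Real.sign (q ⬝ᵥ u) * η) • q) ⬝ᵥ (u - (Real.sign (q ⬝ᵥ u) * η) • q) ≤
      u ⬝ᵥ u - 2 * η * |q ⬝ᵥ u| + η ^ 2 * Fintype.card X := by
  rw [dotProduct_sub_smul_self, ← Real.sign_mul_self_eq_abs]
  have hsq : (Real.sign (q ⬝ᵥ u) * η) ^ 2 * (q ⬝ᵥ q) ≤ η ^ 2 * Fintype.card X := by
    rw [mul_pow]
    exact mul_le_mul (mul_le_of_le_one_left (sq_nonneg η) (Real.sign_sq_le_one _))
      (dotProduct_self_le_card hq) (dotProduct_self_nonneg q) (sq_nonneg η)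
  linarith

lemma frieze_kannan_step_le [Nonempty X] (u q : X → ℝ) (hq : ∀ i, |q i| ≤ 1) {α : ℝ}
    (hα : 0 ≤ α) (hdist : α ≤ |q ⬝ᵥ u|) :
    (u - (Real.sign (q ⬝ᵥ u) * (α / Fintype.card X)) • q) ⬝ᵥ
        (u - (Real.sign (q ⬝ᵥ u) * (α / Fintype.card X)) • q) ≤
      u ⬝ᵥ u - α ^ 2 / Fintype.card X := by
  have hn : (0 : ℝ) < Fintype.card X := Nat.cast_pos.mpr Fintype.card_pos
  have hdrop : 2 * (α / Fintype.card X) * α ≤ 2 * (α / Fintype.card X) * |q ⬝ᵥ u| := by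
    gcongr
  have hη1 : α / Fintype.card X * α = α ^ 2 / Fintype.card X := by ring
  have hη2 : (α / Fintype.card X) ^ 2 * Fintype.card X = α ^ 2 / Fintype.card X := by
    field_simp
  linarith [dotProduct_self_sub_sign_smul_le u q hq (α / Fintype.card X)]

end DotProduct

/-- The Frieze/Kannan update rule is a `B(α)`-iterative database construction
with `B(α) = ‖D‖₂² |X| / α²`: any sequence of updates driven by
`α`-distinguishing linear queries has length at most `‖D‖₂² |X| / α²`. -/
theorem friezeKannan_IDC_bound
    {X : Type*} [Fintype X] [Nonempty X]
    (D : X → ℝ) (α : ℝ) (hα : 0 < α) (C : ℕ)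
    (Dseq : ℕ → X → ℝ) (Q : ℕ → X → ℝ)
    (hstart : Dseq 0 = 0)
    (hQrange : ∀ t < C, ∀ i, Q t i ∈ Set.Icc (0 : ℝ) 1)
    (hdist : ∀ t < C, α ≤ |∑ i, Q t i * D i - ∑ i, Q t i * Dseq t i|)
    (hupd : ∀ t < C, Dseq (t + 1) =
      fun i => Dseq t i -
        Real.sign (∑ j, Q t j * Dseq t j - ∑ j, Q t j * D j) *
          (α / (Fintype.card X)) * Q t i) :
    (C : ℝ) ≤ (∑ i, D i ^ 2) * (Fintype.card X) / α ^ 2 := by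
  set n : ℝ := (Fintype.card X : ℝ)
  have hn : 0 < n := Nat.cast_pos.mpr Fintype.card_pos
  set Φ : ℕ → ℝ := fun t => (D - Dseq t) ⬝ᵥ (D - Dseq t)
  have hdrop : ∀ t < C, Φ (t + 1) ≤ Φ t - α ^ 2 / n := by
    intro t ht
    have hQ : ∀ i, |Q t i| ≤ 1 := fun i =>
      abs_le.mpr ⟨by linarith [(hQrange t ht i).1], (hQrange t ht i).2⟩
    have hresidual : Q t ⬝ᵥ (D - Dseq t) = ∑ i, Q t i * D i - ∑ i, Q t i * Dseq t i :=
      dotProduct_sub _ _ _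
    have hnext : D - Dseq (t + 1) =
        (D - Dseq t) - (Real.sign (Q t ⬝ᵥ (D - Dseq t)) * (α / n)) • Q t := by
      have hsign : Real.sign (∑ j, Q t j * Dseq t j - ∑ j, Q t j * D j) =
          -Real.sign (Q t ⬝ᵥ (D - Dseq t)) := by
        rw [hresidual, ← Real.sign_neg, neg_sub]
      rw [hupd t ht, hsign]
      ext i
      simp only [Pi.sub_apply, Pi.smul_apply, smul_eq_mul]
      ring
    simp only [Φ, hnext]
    exact frieze_kannan_step_le _ _ hQ hα.le (hresidual ▸ hdist t ht)
  have hΦ0 : Φ 0 = ∑ i, D i ^ 2 := by simp [Φ, hstart, dotProduct, sq]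
  have htotal := nat_mul_le_sub_of_forall_le_sub hdrop
  rw [hΦ0, mul_div_assoc', div_le_iff₀ hn] at htotal
  rw [le_div_iff₀ (by positivity)]
  have hΦC : 0 ≤ Φ C * n := mul_nonneg (dotProduct_self_nonneg _) hn.le
  linarith
end

section
/- For any finite set Q of k linear queries on a finite universe X, any database D ∈ ℕ^X with ‖D‖₁ = n, and any α > 0, there exists a database D' ∈ ℕ^X of size ‖D'‖₁ = ⌈n²·log k/α²⌉ such that |q(D) - (n/‖D'‖₁)·q(D')| ≤ α for all q ∈ Q. -/
/-!
Sampling `m` elements i.i.d. from the empirical distribution `w = D / n` works by Hoeffding's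
inequality and a union bound over the queries; the argument below is its derandomization.
If `dⱼ` is the deviation of the counts of the sample from `m` times the `w`-mean of query `j`,
Hoeffding's lemma says that adding one `w`-random element multiplies the expectation of the
potential `∑ⱼ cosh (t dⱼ)` by at most `exp (t² / 8)`, so some element does at least as well.
After `m` steps the potential is at most `k exp (m t² / 8)`, and at `t = 4ε` this forces
`|dⱼ| ≤ m ε` as soon as `log (2k) ≤ 2 m ε²`; the theorem is the case `ε = α / n`.
-/

open Real Finset

section

variable {X : Type*} [Fintype X] {w : X → ℝ}

lemma sum_mul_exp_le_of_mem_Icc {y : X → ℝ} (hw₀ : ∀ i, 0 ≤ w i)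
    (hw₁ : ∑ i, w i = 1) (hy : ∀ i, y i ∈ Set.Icc 0 1) (t : ℝ) :
    ∑ i, w i * exp (t * (y i - ∑ i', w i' * y i')) ≤ exp (t ^ 2 / 8) := by
  let _ : MeasurableSpace X := ⊤
  let p : PMF X := PMF.ofFintype (fun i ↦ ENNReal.ofReal (w i)) <| by
    rw [← ENNReal.ofReal_sum_of_nonneg fun i _ ↦ hw₀ i, hw₁, ENNReal.ofReal_one]
  have hp (i : X) : (p i).toReal = w i := by simp [p, hw₀ i]
  have h := (ProbabilityTheory.hasSubgaussianMGF_of_mem_Icc (μ := p.toMeasure)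
    (measurable_of_countable y).aemeasurable (MeasureTheory.ae_of_all _ hy)).mgf_le t
  simp only [ProbabilityTheory.mgf, PMF.integral_eq_sum, hp, smul_eq_mul] at h
  convert h using 2
  norm_num
  ring

lemma sum_mul_cosh_le_of_mem_Icc {y : X → ℝ} (hw₀ : ∀ i, 0 ≤ w i)
    (hw₁ : ∑ i, w i = 1) (hy : ∀ i, y i ∈ Set.Icc 0 1) (t s : ℝ) :
    ∑ i, w i * cosh (t * (s + (∑ i', w i' * y i' - y i))) ≤
      exp (t ^ 2 / 8) * cosh (t * s) := by
  have hexp (u : ℝ) (i : X) : exp (u * (s + (∑ i', w i' * y i' - y i))) =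
      exp (u * s) * exp (-u * (y i - ∑ i', w i' * y i')) := by
    rw [← exp_add]; ring_nf
  calc ∑ i, w i * cosh (t * (s + (∑ i', w i' * y i' - y i)))
      = (exp (t * s) * ∑ i, w i * exp (-t * (y i - ∑ i', w i' * y i')) +
          exp (-t * s) * ∑ i, w i * exp (- -t * (y i - ∑ i', w i' * y i'))) / 2 := by
        simp only [cosh_eq, ← neg_mul, hexp, mul_sum, ← sum_add_distrib, sum_div]
        congr 1 with i; ring
    _ ≤ (exp (t * s) * exp ((-t) ^ 2 / 8) + exp (-t * s) * exp ((- -t) ^ 2 / 8)) / 2 := by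
        gcongr <;> exact sum_mul_exp_le_of_mem_Icc hw₀ hw₁ hy _
    _ = exp (t ^ 2 / 8) * cosh (t * s) := by
        rw [cosh_eq]; ring_nf

lemma exists_le_sum_mul_of_sum_eq_one (hw₀ : ∀ i, 0 ≤ w i) (hw₁ : ∑ i, w i = 1)
    (f : X → ℝ) :
    ∃ i, f i ≤ ∑ i, w i * f i := by
  obtain ⟨i, -, hi⟩ := (concaveOn_id convex_univ).exists_le_of_centerMass (t := univ)
    (fun i _ ↦ hw₀ i) (by rw [hw₁]; exact one_pos) (fun i _ ↦ Set.mem_univ (f i))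
  exact ⟨i, by simpa [centerMass_eq_of_sum_1 _ _ hw₁] using hi⟩

variable {ι : Type*} [Fintype ι] {Q : ι → X → ℝ}

lemma exists_sum_eq_sum_cosh_le (hw₀ : ∀ i, 0 ≤ w i) (hw₁ : ∑ i, w i = 1)
    (hQ : ∀ j i, Q j i ∈ Set.Icc 0 1) (t : ℝ) (m : ℕ) :
    ∃ c : X → ℕ, ∑ i, c i = m ∧
      ∑ j, cosh (t * ∑ i, (c i : ℝ) * (∑ i', w i' * Q j i' - Q j i)) ≤
        Fintype.card ι * exp (t ^ 2 / 8) ^ m := by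
  classical
  induction m with
  | zero => exact ⟨0, by simp⟩
  | succ m ih =>
    obtain ⟨c, hc, hcosh⟩ := ih
    let d : ι → ℝ := fun j ↦ ∑ i, (c i : ℝ) * (∑ i', w i' * Q j i' - Q j i)
    obtain ⟨i₀, hi₀⟩ := exists_le_sum_mul_of_sum_eq_one hw₀ hw₁
      fun i₀ ↦ ∑ j, cosh (t * (d j + (∑ i', w i' * Q j i' - Q j i₀)))
    refine ⟨c + Pi.single i₀ 1, by simp [sum_add_distrib, hc], ?_⟩
    calc _ = ∑ j, cosh (t * (d j + (∑ i', w i' * Q j i' - Q j i₀))) := by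
          simp [d, add_mul, sum_add_distrib, Pi.single_apply]
      _ ≤ ∑ i, w i * ∑ j, cosh (t * (d j + (∑ i', w i' * Q j i' - Q j i))) := hi₀
      _ = ∑ j, ∑ i, w i * cosh (t * (d j + (∑ i', w i' * Q j i' - Q j i))) := by
          simp only [mul_sum]; exact sum_comm
      _ ≤ ∑ j, exp (t ^ 2 / 8) * cosh (t * d j) :=
          sum_le_sum fun j _ ↦ sum_mul_cosh_le_of_mem_Icc hw₀ hw₁ (hQ j) t (d j)
      _ ≤ exp (t ^ 2 / 8) * (Fintype.card ι * exp (t ^ 2 / 8) ^ m) := by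
          rw [← mul_sum]; gcongr
      _ = Fintype.card ι * exp (t ^ 2 / 8) ^ (m + 1) := by ring

lemma exists_sum_eq_abs_sub_le (hw₀ : ∀ i, 0 ≤ w i) (hw₁ : ∑ i, w i = 1)
    (hQ : ∀ j i, Q j i ∈ Set.Icc 0 1) {m : ℕ} {ε : ℝ} (hε : 0 < ε)
    (hm : log (2 * Fintype.card ι) ≤ 2 * m * ε ^ 2) :
    ∃ c : X → ℕ, ∑ i, c i = m ∧
      ∀ j, |m * ∑ i, w i * Q j i - ∑ i, Q j i * c i| ≤ m * ε := by
  obtain ⟨c, hc, hcosh⟩ := exists_sum_eq_sum_cosh_le hw₀ hw₁ hQ (4 * ε) m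
  refine ⟨c, hc, fun j ↦ ?_⟩
  have hcard : (0 : ℝ) < Fintype.card ι := by exact_mod_cast Fintype.card_pos_iff.2 ⟨j⟩
  have hcR : ∑ i, (c i : ℝ) = m := by exact_mod_cast hc
  have hdev : ∑ i, (c i : ℝ) * (∑ i', w i' * Q j i' - Q j i) =
      m * ∑ i, w i * Q j i - ∑ i, Q j i * c i := by
    rw [← hcR, sum_mul, ← sum_sub_distrib]
    exact sum_congr rfl fun i _ ↦ by ring
  have hj := (single_le_sum (fun j _ ↦ (cosh_pos _).le) (mem_univ j)).trans hcosh
  rw [hdev] at hj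
  generalize m * ∑ i, w i * Q j i - ∑ i, Q j i * c i = d at hj ⊢
  have hexp : exp |4 * ε * d| ≤ exp (log (2 * Fintype.card ι) + 2 * m * ε ^ 2) := calc
    exp |4 * ε * d| ≤ 2 * cosh (4 * ε * d) := by
      rw [cosh_eq]; linarith [exp_abs_le (4 * ε * d)]
    _ ≤ 2 * (Fintype.card ι * exp ((4 * ε) ^ 2 / 8) ^ m) := by gcongr
    _ = exp (log (2 * Fintype.card ι) + 2 * m * ε ^ 2) := by
      rw [exp_add, exp_log (by positivity), ← exp_nat_mul]; ring_nf
  rw [exp_le_exp, abs_mul, abs_of_pos (by positivity : (0 : ℝ) < 4 * ε)] at hexp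
  exact le_of_mul_le_mul_left (by linarith : 4 * ε * |d| ≤ 4 * ε * (m * ε)) (by positivity)

end

theorem small_database_for_linear_queries_general
    {X : Type*} [Fintype X]
    (k n : ℕ) (hk : 2 ≤ k) (hn : 1 ≤ n)
    (Q : Fin k → X → ℝ) (hQ : ∀ j i, Q j i ∈ Set.Icc (0 : ℝ) 1)
    (D : X → ℕ) (hD : ∑ i, D i = n)
    (α : ℝ) (hα : 0 < α) :
    ∃ D' : X → ℕ,
      (∑ i, D' i) = ⌈(n : ℝ) ^ 2 * Real.log k / α ^ 2⌉₊ ∧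
      ∀ j, |(∑ i, Q j i * (D i : ℝ)) -
          ((n : ℝ) / (∑ i, (D' i : ℝ))) * ∑ i, Q j i * (D' i : ℝ)| ≤ α := by
  set m := ⌈(n : ℝ) ^ 2 * Real.log k / α ^ 2⌉₊
  have hn₀ : (0 : ℝ) < n := by exact_mod_cast hn
  have hk₂ : (2 : ℝ) ≤ k := by exact_mod_cast hk
  have hlogk : 0 < log k := log_pos (by linarith)
  have hm₀ : (0 : ℝ) < m := by simpa [m] using Nat.ceil_pos.2 (by positivity)
  have hm : log (2 * Fintype.card (Fin k)) ≤ 2 * m * (α / n) ^ 2 := by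
    have hceil := (div_le_iff₀ (by positivity)).1 (Nat.le_ceil ((n : ℝ) ^ 2 * log k / α ^ 2))
    rw [Fintype.card_fin, log_mul two_ne_zero (by positivity), div_pow, mul_div_assoc',
      le_div_iff₀ (by positivity)]
    nlinarith [log_le_log two_pos hk₂]
  have hDR : ∑ i, (D i : ℝ) = n := by exact_mod_cast hD
  obtain ⟨D', hD', hdev⟩ := exists_sum_eq_abs_sub_le (w := fun i ↦ D i / n) (Q := Q)
    (fun i ↦ by positivity) (by rw [← sum_div, hDR, div_self hn₀.ne']) hQ (by positivity) hm
  refine ⟨D', hD', fun j ↦ ?_⟩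
  have hD'R : ∑ i, (D' i : ℝ) = m := by exact_mod_cast hD'
  have hmean : ∑ i, (D i : ℝ) / n * Q j i = (∑ i, Q j i * D i) / n := by
    rw [sum_div]; exact sum_congr rfl fun i _ ↦ by ring
  calc _ = |n / m * (m * ∑ i, D i / n * Q j i - ∑ i, Q j i * D' i)| := by
        rw [hD'R, hmean]; congr 1; field_simp
    _ = n / m * |m * ∑ i, D i / n * Q j i - ∑ i, Q j i * D' i| := by
        rw [abs_mul, abs_of_pos (div_pos hn₀ hm₀)]
    _ ≤ n / m * (m * (α / n)) := by gcongr; exact hdev j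
    _ = α := by field_simp

/-- Blum–Ligett–Roth small-database theorem: for any `k ≥ 2` linear queries
and any database `D` of size `n ≥ 1`, there is a database `D'` of size
`⌈n² log k / α²⌉` whose (rescaled) answers agree with those of `D` up to
additive error `α` on every query. -/
theorem small_database_for_linear_queries
    {X : Type*} [Fintype X] [Nonempty X]
    (k n : ℕ) (hk : 2 ≤ k) (hn : 1 ≤ n)
    (Q : Fin k → X → ℝ) (hQ : ∀ j i, Q j i ∈ Set.Icc (0 : ℝ) 1)
    (D : X → ℕ) (hD : ∑ i, D i = n)
    (α : ℝ) (hα : 0 < α) :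
    ∃ D' : X → ℕ,
      (∑ i, D' i) = ⌈(n : ℝ) ^ 2 * Real.log k / α ^ 2⌉₊ ∧
      ∀ j, |(∑ i, Q j i * (D i : ℝ)) -
          ((n : ℝ) / (∑ i, (D' i : ℝ))) * ∑ i, Q j i * (D' i : ℝ)| ≤ α :=
  small_database_for_linear_queries_general k n hk hn Q hQ D hD α hα
end

section
/- The multiplicative weights update rule is a B(α)-iterative database construction with B(α) = 4n²log|X|/α²: let D be a normalized database (probability distribution on finite X), let η = α/(2n) with α, n > 0 and α/n ≤ 1. Suppose D^0 is uniform on X, and at each step t a linear query Q^t ∈ [0,1]^X satisfies |Q^t(D) - Q^t(D^t)| ≥ α/n, and D^{t+1} is obtained from D^t by the multiplicative weights update with loss r_t = Q^t if Q^t(D^t) > Q^t(D), and r_t = 1 - Q^t otherwise. Then the number of steps is at most 4n²log|X|/α². -/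
open BigOperators

private lemma mw_exp_bound (x : ℝ) (hx : 0 ≤ x) : Real.exp (-x) ≤ 1 - x + x ^ 2 := by
  have h : Real.exp (-x) * Real.exp x = 1 := by rw [← Real.exp_add]; simp
  have h1 : x + 1 ≤ Real.exp x := Real.add_one_le_exp x
  have h2 : 0 < Real.exp (-x) := Real.exp_pos _
  nlinarith [mul_le_mul_of_nonneg_left h1 h2.le]

private lemma mw_kl_nonneg {X : Type*} [Fintype X] (P Dd : X → ℝ)
    (hD : ∀ i, 0 ≤ Dd i) (hP : ∀ i, 0 < P i)
    (hDs : ∑ i, Dd i = 1) (hPs : ∑ i, P i = 1) :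
    0 ≤ ∑ i, Dd i * Real.log (Dd i / P i) := by
  have h1 : ∀ i, Dd i * Real.log (P i / Dd i) ≤ P i - Dd i := by
    intro i
    rcases eq_or_lt_of_le (hD i) with h | h
    · simp [← h]; linarith [hP i]
    · have hl := Real.log_le_sub_one_of_pos (div_pos (hP i) h)
      have := mul_le_mul_of_nonneg_left hl h.le
      calc Dd i * Real.log (P i / Dd i) ≤ Dd i * (P i / Dd i - 1) := this
        _ = P i - Dd i := by field_simp
  have h3 : ∀ i, Dd i * Real.log (Dd i / P i) = -(Dd i * Real.log (P i / Dd i)) := by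
    intro i
    rcases eq_or_lt_of_le (hD i) with h | h
    · simp [← h]
    · rw [Real.log_div h.ne' (hP i).ne', Real.log_div (hP i).ne' h.ne']; ring
  have h2 : ∑ i, Dd i * Real.log (P i / Dd i) ≤ 0 := by
    calc ∑ i, Dd i * Real.log (P i / Dd i) ≤ ∑ i, (P i - Dd i) :=
        Finset.sum_le_sum fun i _ => h1 i
      _ = 0 := by rw [Finset.sum_sub_distrib, hPs, hDs]; ring
  have h4 : ∑ i, Dd i * Real.log (Dd i / P i) = -∑ i, Dd i * Real.log (P i / Dd i) := by
    rw [← Finset.sum_neg_distrib]; exact Finset.sum_congr rfl fun i _ => h3 i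
  rw [h4]; linarith

/-- The multiplicative weights update rule is a `B(α)`-iterative database
construction with `B(α) = 4 n² log |X| / α²`: starting at the uniform
distribution, any sequence of multiplicative weights updates (with learning
rate `η = α / (2n)`) driven by linear queries with error at least `α / n`
has length at most `4 n² log |X| / α²`. -/
theorem multiplicative_weights_IDC_bound
    {X : Type*} [Fintype X] [Nonempty X]
    (D : X → ℝ) (hD_nonneg : ∀ i, 0 ≤ D i) (hD_sum : ∑ i, D i = 1)
    (n α : ℝ) (hn : 0 < n) (hα : 0 < α) (hαn : α / n ≤ 1)
    (η : ℝ) (hη : η = α / (2 * n))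
    (C : ℕ) (Dseq : ℕ → X → ℝ) (Q : ℕ → X → ℝ)
    (hstart : Dseq 0 = fun _ => (Fintype.card X : ℝ)⁻¹)
    (hQrange : ∀ t < C, ∀ i, Q t i ∈ Set.Icc (0 : ℝ) 1)
    (hdist : ∀ t < C, α / n ≤ |(∑ i, Q t i * D i) - ∑ i, Q t i * Dseq t i|)
    (hupd : ∀ t < C,
      Dseq (t + 1) = fun i =>
        let r : X → ℝ := fun j =>
          if (∑ i, Q t i * D i) < (∑ i, Q t i * Dseq t i) then Q t j else 1 - Q t j
        Dseq t i * Real.exp (-η * r i) / ∑ j, Dseq t j * Real.exp (-η * r j)) :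
    (C : ℝ) ≤ 4 * n ^ 2 * Real.log (Fintype.card X) / α ^ 2 := by
  have hcard : 0 < (Fintype.card X : ℝ) := by exact_mod_cast Fintype.card_pos
  have hηpos : 0 < η := by rw [hη]; positivity
  -- invariant: positivity and normalization of Dseq t for t ≤ C
  have hinv : ∀ t, t ≤ C → (∀ i, 0 < Dseq t i) ∧ (∑ i, Dseq t i = 1) := by
    intro t
    induction t with
    | zero =>
      intro _
      refine ⟨fun i => by simp only [hstart]; positivity, ?_⟩
      simp only [hstart]
      rw [Finset.sum_const, Finset.card_univ, nsmul_eq_mul, mul_inv_cancel₀ hcard.ne']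
    | succ t ih =>
      intro ht
      have htC : t < C := ht
      obtain ⟨hpos, hsum⟩ := ih htC.le
      set r : X → ℝ := fun j =>
        if (∑ i, Q t i * D i) < (∑ i, Q t i * Dseq t i) then Q t j else 1 - Q t j with hr
      have hupd' : Dseq (t + 1) = fun i =>
          Dseq t i * Real.exp (-η * r i) / ∑ j, Dseq t j * Real.exp (-η * r j) :=
        hupd t htC
      have hZpos : 0 < ∑ j, Dseq t j * Real.exp (-η * r j) :=
        Finset.sum_pos (fun j _ => mul_pos (hpos j) (Real.exp_pos _)) Finset.univ_nonempty
      constructor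
      · intro i
        rw [hupd']
        exact div_pos (mul_pos (hpos i) (Real.exp_pos _)) hZpos
      · rw [hupd']
        simp only
        rw [← Finset.sum_div, div_self hZpos.ne']
  -- the potential
  set Φ : ℕ → ℝ := fun t => ∑ i, D i * Real.log (D i / Dseq t i) with hΦdef
  have hDle1 : ∀ i, D i ≤ 1 := by
    intro i
    calc D i ≤ ∑ j, D j := Finset.single_le_sum (fun j _ => hD_nonneg j) (Finset.mem_univ i)
      _ = 1 := hD_sum
  -- Φ 0 ≤ log |X|
  have hΦ0 : Φ 0 ≤ Real.log (Fintype.card X) := by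
    have hterm : ∀ i, D i * Real.log (D i / Dseq 0 i) ≤ D i * Real.log (Fintype.card X) := by
      intro i
      rcases eq_or_lt_of_le (hD_nonneg i) with h | h
      · simp [← h]
      · simp only [hstart]
        have hdi : D i / ((Fintype.card X : ℝ))⁻¹ = D i * (Fintype.card X : ℝ) := by
          field_simp
        rw [hdi, Real.log_mul h.ne' hcard.ne']
        have hlog : Real.log (D i) ≤ 0 := Real.log_nonpos (hD_nonneg i) (hDle1 i)
        nlinarith
    calc Φ 0 ≤ ∑ i, D i * Real.log (Fintype.card X) := Finset.sum_le_sum fun i _ => hterm i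
      _ = Real.log (Fintype.card X) := by rw [← Finset.sum_mul, hD_sum, one_mul]
  -- key per-step drop
  have key : ∀ t, t < C → Φ (t + 1) + α ^ 2 / (4 * n ^ 2) ≤ Φ t := by
    intro t htC
    obtain ⟨hpos, hsum⟩ := hinv t htC.le
    obtain ⟨hpos', _⟩ := hinv (t + 1) htC
    set r : X → ℝ := fun j =>
      if (∑ i, Q t i * D i) < (∑ i, Q t i * Dseq t i) then Q t j else 1 - Q t j with hr
    have hr01 : ∀ j, 0 ≤ r j ∧ r j ≤ 1 := by
      intro j
      obtain ⟨h0, h1⟩ := hQrange t htC j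
      simp only [hr]
      split <;> constructor <;> linarith
    have hupd' : Dseq (t + 1) = fun i =>
        Dseq t i * Real.exp (-η * r i) / ∑ j, Dseq t j * Real.exp (-η * r j) :=
      hupd t htC
    set Z : ℝ := ∑ j, Dseq t j * Real.exp (-η * r j) with hZ
    have hZpos : 0 < Z :=
      Finset.sum_pos (fun j _ => mul_pos (hpos j) (Real.exp_pos _)) Finset.univ_nonempty
    set rD : ℝ := ∑ i, D i * r i with hrD
    set rDt : ℝ := ∑ i, Dseq t i * r i with hrDt
    -- Z ≤ 1 - η * rDt + η²
    have hZle : Z ≤ 1 - η * rDt + η ^ 2 := by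
      have hterm : ∀ j, Dseq t j * Real.exp (-η * r j)
          ≤ Dseq t j * (1 - η * r j + η ^ 2) := by
        intro j
        obtain ⟨h0, h1⟩ := hr01 j
        have hx : 0 ≤ η * r j := mul_nonneg hηpos.le h0
        have hexp : Real.exp (-(η * r j)) ≤ 1 - η * r j + (η * r j) ^ 2 := mw_exp_bound _ hx
        have hsq : (η * r j) ^ 2 ≤ η ^ 2 := by
          rw [mul_pow]
          have hr2 : r j ^ 2 ≤ 1 := by nlinarith
          nlinarith [mul_nonneg (sq_nonneg η) (by linarith : (0:ℝ) ≤ 1 - r j ^ 2)]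
        have hfin : Real.exp (-η * r j) ≤ 1 - η * r j + η ^ 2 := by
          rw [neg_mul]; linarith
        exact mul_le_mul_of_nonneg_left hfin (hpos j).le
      calc Z ≤ ∑ j, Dseq t j * (1 - η * r j + η ^ 2) := Finset.sum_le_sum fun j _ => hterm j
        _ = (∑ j, Dseq t j) - η * (∑ j, Dseq t j * r j) + η ^ 2 * ∑ j, Dseq t j := by
            rw [Finset.mul_sum, Finset.mul_sum, ← Finset.sum_sub_distrib,
              ← Finset.sum_add_distrib]
            exact Finset.sum_congr rfl fun j _ => by ring
        _ = 1 - η * rDt + η ^ 2 := by rw [hsum, ← hrDt]; ring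
    have hlogZ : Real.log Z ≤ -η * rDt + η ^ 2 := by
      have := Real.log_le_sub_one_of_pos hZpos
      linarith
    -- gap between expectations of r
    have hgap : α / n ≤ rDt - rD := by
      have hd := hdist t htC
      by_cases hc : (∑ i, Q t i * D i) < (∑ i, Q t i * Dseq t i)
      · have habs : |(∑ i, Q t i * D i) - ∑ i, Q t i * Dseq t i|
            = (∑ i, Q t i * Dseq t i) - ∑ i, Q t i * D i := by
          rw [abs_of_nonpos (by linarith)]; ring
        rw [habs] at hd
        have e1 : rDt = ∑ i, Q t i * Dseq t i := by
          rw [hrDt]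
          simp only [hr, if_pos hc]
          exact Finset.sum_congr rfl fun i _ => mul_comm _ _
        have e2 : rD = ∑ i, Q t i * D i := by
          rw [hrD]
          simp only [hr, if_pos hc]
          exact Finset.sum_congr rfl fun i _ => mul_comm _ _
        rw [e1, e2]; linarith
      · push_neg at hc
        have habs : |(∑ i, Q t i * D i) - ∑ i, Q t i * Dseq t i|
            = (∑ i, Q t i * D i) - ∑ i, Q t i * Dseq t i := by
          rw [abs_of_nonneg (by linarith)]
        rw [habs] at hd
        have e1 : rDt = 1 - ∑ i, Q t i * Dseq t i := by
          rw [hrDt, ← hsum, ← Finset.sum_sub_distrib]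
          simp only [hr, if_neg (not_lt.mpr hc)]
          exact Finset.sum_congr rfl fun i _ => by ring
        have e2 : rD = 1 - ∑ i, Q t i * D i := by
          rw [hrD, ← hD_sum, ← Finset.sum_sub_distrib]
          simp only [hr, if_neg (not_lt.mpr hc)]
          exact Finset.sum_congr rfl fun i _ => by ring
        rw [e1, e2]; linarith
    -- the potential drop identity
    have hdiff : Φ t - Φ (t + 1) = -η * rD - Real.log Z := by
      have hterm : ∀ i, D i * Real.log (D i / Dseq t i)
          - D i * Real.log (D i / Dseq (t + 1) i)
          = D i * (-η * r i - Real.log Z) := by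
        intro i
        rcases eq_or_lt_of_le (hD_nonneg i) with h | h
        · simp [← h]
        · have hlr : Real.log (D i / Dseq t i) - Real.log (D i / Dseq (t + 1) i)
              = -η * r i - Real.log Z := by
            rw [Real.log_div h.ne' (hpos i).ne', Real.log_div h.ne' (hpos' i).ne']
            have hDt1 : Dseq (t + 1) i = Dseq t i * Real.exp (-η * r i) / Z := by
              rw [hupd']
            rw [hDt1, Real.log_div (mul_pos (hpos i) (Real.exp_pos _)).ne' hZpos.ne',
              Real.log_mul (hpos i).ne' (Real.exp_pos _).ne', Real.log_exp]
            ring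
          rw [← mul_sub, hlr]
      calc Φ t - Φ (t + 1)
          = ∑ i, (D i * Real.log (D i / Dseq t i)
              - D i * Real.log (D i / Dseq (t + 1) i)) := by
            rw [Finset.sum_sub_distrib]
        _ = ∑ i, D i * (-η * r i - Real.log Z) :=
            Finset.sum_congr rfl fun i _ => hterm i
        _ = -η * (∑ i, D i * r i) - (∑ i, D i) * Real.log Z := by
            rw [Finset.mul_sum, Finset.sum_mul, ← Finset.sum_sub_distrib]
            exact Finset.sum_congr rfl fun i _ => by ring
        _ = -η * rD - Real.log Z := by rw [hD_sum, ← hrD]; ring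
    have hmulgap : η * (α / n) ≤ η * (rDt - rD) :=
      mul_le_mul_of_nonneg_left hgap hηpos.le
    have hval : η * (α / n) - η ^ 2 = α ^ 2 / (4 * n ^ 2) := by
      rw [hη]; field_simp; ring
    linarith
  -- chain the drops
  have hchain : ∀ t, t ≤ C → (t : ℝ) * (α ^ 2 / (4 * n ^ 2)) + Φ t ≤ Φ 0 := by
    intro t
    induction t with
    | zero => intro _; simp
    | succ t ih =>
      intro ht
      have htC : t < C := ht
      have h1 := key t htC
      have h2 := ih htC.le
      push_cast
      push_cast at h2
      linarith
  have hΦC : 0 ≤ Φ C :=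
    mw_kl_nonneg (Dseq C) D hD_nonneg (hinv C le_rfl).1 hD_sum (hinv C le_rfl).2
  have hmain := hchain C le_rfl
  have hfin : (C : ℝ) * (α ^ 2 / (4 * n ^ 2)) ≤ Real.log (Fintype.card X) := by linarith
  rw [le_div_iff₀ (pow_pos hα 2)]
  have h4 : (C : ℝ) * (α ^ 2 / (4 * n ^ 2)) * (4 * n ^ 2) = (C : ℝ) * α ^ 2 := by
    field_simp
  nlinarith [mul_le_mul_of_nonneg_right hfin (by positivity : (0:ℝ) ≤ 4 * n ^ 2)]
end
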